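/- arXiv:1811.00829 — 2 statements merged into one kernel-verified Lean document; each statement's English description precedes it below -/
import Mathlib

section
/- Let v : B² → ℝᴺ be smooth with |v| ≡ 1 and let λ : B² → ℝ be smooth and positive. If div(λ²∇v^i) = Ω_{ij}·λ²∇v^j for all i, where Ω_{ij} = v^j∇v^i − v^i∇v^j, then the conservation law div(λ²Ω_{ij}) = 0 holds for all i, j. -/
noncomputable section

/-- The unit disk in `ℝ²`. -/
def B2 : Set (EuclideanSpace ℝ (Fin 2)) := Metric.ball 0 1

/-- `∂_k` of a scalar function on `ℝ²`. -/
def pdR (k : Fin 2) (f : EuclideanSpace ℝ (Fin 2) → ℝ)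
    (x : EuclideanSpace ℝ (Fin 2)) : ℝ :=
  fderiv ℝ f x (EuclideanSpace.single k 1)

/-- `∂_k` of the `i`-th component of a map `v : ℝ² → ℝᴺ`. -/
def pd {N : ℕ} (k : Fin 2) (v : EuclideanSpace ℝ (Fin 2) → Fin N → ℝ) (i : Fin N)
    (x : EuclideanSpace ℝ (Fin 2)) : ℝ :=
  fderiv ℝ (fun y => v y i) x (EuclideanSpace.single k 1)

/-- if smooth `v : B² → Sᴺ⁻¹` and smooth positive `λ` satisfy
`div(λ²∇v^i) = Ω_{ij}·λ²∇v^j` with `Ω_{ij} = v^j∇v^i − v^i∇v^j`, then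
`div(λ²Ω_{ij}) = 0` on `B²`. -/
theorem stmt2 {N : ℕ} (v : EuclideanSpace ℝ (Fin 2) → Fin N → ℝ)
    (lam : EuclideanSpace ℝ (Fin 2) → ℝ)
    (hv : ContDiff ℝ (⊤ : ℕ∞) v) (hlam : ContDiff ℝ (⊤ : ℕ∞) lam)
    (hpos : ∀ x ∈ B2, 0 < lam x)
    (hsphere : ∀ x ∈ B2, ∑ i, (v x i) ^ 2 = 1)
    (hPDE : ∀ x ∈ B2, ∀ i : Fin N,
      ∑ k : Fin 2, pdR k (fun y => (lam y) ^ 2 * pd k v i y) x =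
      ∑ j : Fin N, ∑ k : Fin 2,
        (v x j * pd k v i x - v x i * pd k v j x) * ((lam x) ^ 2 * pd k v j x)) :
    ∀ x ∈ B2, ∀ i j : Fin N,
      ∑ k : Fin 2,
        pdR k (fun y => (lam y) ^ 2 * (v y j * pd k v i y - v y i * pd k v j y)) x
        = 0 := by
  intro x hx i j
  -- smoothness of components and partial derivatives
  have hvc : ∀ m : Fin N, ContDiff ℝ (⊤ : ℕ∞) (fun y => v y m) := fun m => contDiff_pi.mp hv m
  have hpdc : ∀ (k : Fin 2) (m : Fin N), ContDiff ℝ (⊤ : ℕ∞) (pd k v m) := by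
    intro k m
    exact ((hvc m).fderiv_right (by simp)).clm_apply contDiff_const
  have hlam2 : ContDiff ℝ (⊤ : ℕ∞) (fun y => lam y ^ 2) := hlam.pow 2
  have hgc : ∀ (k : Fin 2) (m : Fin N),
      ContDiff ℝ (⊤ : ℕ∞) (fun y => lam y ^ 2 * pd k v m y) :=
    fun k m => hlam2.mul (hpdc k m)
  have hvd : ∀ (m : Fin N) (y : EuclideanSpace ℝ (Fin 2)),
      DifferentiableAt ℝ (fun z => v z m) y :=
    fun m y => ((hvc m).differentiable (by simp)) y
  have hgd : ∀ (k : Fin 2) (m : Fin N) (y : EuclideanSpace ℝ (Fin 2)),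
      DifferentiableAt ℝ (fun z => lam z ^ 2 * pd k v m z) y :=
    fun k m y => ((hgc k m).differentiable (by simp)) y
  -- product rule expansion
  have hprod : ∀ (k : Fin 2) (a b : Fin N),
      pdR k (fun y => lam y ^ 2 * (v y b * pd k v a y - v y a * pd k v b y)) x
      = v x b * pdR k (fun y => lam y ^ 2 * pd k v a y) x
        - v x a * pdR k (fun y => lam y ^ 2 * pd k v b y) x
        + (lam x ^ 2 * pd k v a x) * pd k v b x
        - (lam x ^ 2 * pd k v b x) * pd k v a x := by
    intro k a b
    have h1 : (fun y => lam y ^ 2 * (v y b * pd k v a y - v y a * pd k v b y))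
        = fun y => v y b * (lam y ^ 2 * pd k v a y)
            - v y a * (lam y ^ 2 * pd k v b y) := by
      funext y; ring
    rw [pdR, h1, fderiv_fun_sub (f := fun y => v y b * (lam y ^ 2 * pd k v a y))
        (g := fun y => v y a * (lam y ^ 2 * pd k v b y)) ((hvd b x).mul (hgd k a x)) ((hvd a x).mul (hgd k b x)),
      fderiv_fun_mul (hvd b x) (hgd k a x), fderiv_fun_mul (hvd a x) (hgd k b x)]
    simp only [ContinuousLinearMap.sub_apply, ContinuousLinearMap.add_apply,
      ContinuousLinearMap.smul_apply, smul_eq_mul]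
    show v x b * fderiv ℝ (fun y => lam y ^ 2 * pd k v a y) x (EuclideanSpace.single k 1)
        + (lam x ^ 2 * pd k v a x) * pd k v b x
        - (v x a * fderiv ℝ (fun y => lam y ^ 2 * pd k v b y) x (EuclideanSpace.single k 1)
        + (lam x ^ 2 * pd k v b x) * pd k v a x) = _
    rw [pdR, pdR]; ring
  -- gradient of |v|² vanishes on B2
  have hgrad : ∀ k : Fin 2, ∑ l, v x l * pd k v l x = 0 := by
    intro k
    have hsq : ∀ l : Fin N, ∀ y, DifferentiableAt ℝ (fun z => v z l ^ 2) y := by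
      intro l y
      exact (hvd l y).pow 2
    have h1 : fderiv ℝ (fun y => ∑ l, v y l ^ 2) x = 0 := by
      have heq : (fun y => ∑ l, v y l ^ 2) =ᶠ[nhds x] (fun _ => (1 : ℝ)) := by
        filter_upwards [Metric.isOpen_ball.mem_nhds hx] with y hy
        exact hsphere y hy
      rw [heq.fderiv_eq, fderiv_fun_const]
      rfl
    have h2 : fderiv ℝ (fun y => ∑ l, v y l ^ 2) x (EuclideanSpace.single k 1)
        = ∑ l, 2 * v x l * pd k v l x := by
      rw [fderiv_fun_sum (fun l _ => hsq l x)]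
      rw [ContinuousLinearMap.sum_apply]
      refine Finset.sum_congr rfl fun l _ => ?_
      have hsq2 : (fun z => v z l ^ 2) = fun z => v z l * v z l := by
        funext z; ring
      rw [hsq2, fderiv_fun_mul (hvd l x) (hvd l x)]
      simp only [ContinuousLinearMap.add_apply, ContinuousLinearMap.smul_apply,
        smul_eq_mul]
      rw [show fderiv ℝ (fun z => v z l) x (EuclideanSpace.single k 1) = pd k v l x from rfl]
      ring
    rw [h1] at h2
    simp only [ContinuousLinearMap.zero_apply] at h2
    have h3 : (2 : ℝ) * ∑ l, v x l * pd k v l x = ∑ l, 2 * v x l * pd k v l x := by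
      rw [Finset.mul_sum]
      exact Finset.sum_congr rfl fun l _ => by ring
    rw [← h2] at h3
    linarith
  -- main computation
  calc ∑ k : Fin 2,
        pdR k (fun y => lam y ^ 2 * (v y j * pd k v i y - v y i * pd k v j y)) x
      = ∑ k : Fin 2, (v x j * pdR k (fun y => lam y ^ 2 * pd k v i y) x
          - v x i * pdR k (fun y => lam y ^ 2 * pd k v j y) x) := by
        refine Finset.sum_congr rfl fun k _ => ?_
        rw [hprod k i j]; ring
    _ = v x j * (∑ k : Fin 2, pdR k (fun y => lam y ^ 2 * pd k v i y) x)
        - v x i * (∑ k : Fin 2, pdR k (fun y => lam y ^ 2 * pd k v j y) x) := by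
        rw [Finset.sum_sub_distrib, Finset.mul_sum, Finset.mul_sum]
    _ = v x j * (∑ l : Fin N, ∑ k : Fin 2,
          (v x l * pd k v i x - v x i * pd k v l x) * (lam x ^ 2 * pd k v l x))
        - v x i * (∑ l : Fin N, ∑ k : Fin 2,
          (v x l * pd k v j x - v x j * pd k v l x) * (lam x ^ 2 * pd k v l x)) := by
        rw [hPDE x hx i, hPDE x hx j]
    _ = ∑ k : Fin 2, ∑ l : Fin N, ((lam x ^ 2 * pd k v i x * v x j
          - lam x ^ 2 * pd k v j x * v x i) * (v x l * pd k v l x)) := by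
        rw [Finset.mul_sum, Finset.mul_sum, ← Finset.sum_sub_distrib, Finset.sum_comm]
        refine Finset.sum_congr rfl fun k _ => ?_
        rw [Finset.mul_sum, Finset.mul_sum, ← Finset.sum_sub_distrib]
        exact Finset.sum_congr rfl fun l _ => by ring
    _ = 0 := by
        refine Finset.sum_eq_zero fun k _ => ?_
        rw [← Finset.mul_sum, hgrad k]; ring
end
end

section
/- Suppose a sequence of exponents (p_i) in (2,∞) satisfies the recursion 1/p_{i+1} = 1/p_i − α/(4p_i + 4 − 2α) for a fixed α ∈ (0,1) and p_1 > 2. Then (p_i) is strictly increasing and p_i → ∞ as i → ∞. -/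
open Filter

/-! Since `α / (4p + 4 - 2α) ≥ α / (6p)` for `p ≥ 2`, each step multiplies `1/p` by at most
`1 - α/6`, so `p` grows at least geometrically with ratio `6 / (6 - α) > 1`. -/

lemma six_div_six_sub_mul_le_of_one_div_eq {α p p' : ℝ} (hα0 : 0 < α) (hα6 : α < 6)
    (hp : 2 ≤ p) (hp' : 0 < p')
    (hrec : 1 / p' = 1 / p - α / (4 * p + 4 - 2 * α)) :
    6 / (6 - α) * p ≤ p' := by
  have hp0 : 0 < p := by linarith
  have hdecr : α / (6 * p) ≤ α / (4 * p + 4 - 2 * α) :=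
    div_le_div_of_nonneg_left hα0.le (by linarith) (by linarith)
  have hinv : 1 / p' ≤ 1 / (6 / (6 - α) * p) := by
    calc 1 / p' ≤ 1 / p - α / (6 * p) := by linarith
      _ = 1 / (6 / (6 - α) * p) := by field_simp
  exact le_of_one_div_le_one_div hp' hinv

/-- if exponents `p_i ∈ (2,∞)` satisfy
`1/p_{i+1} = 1/p_i − α/(4p_i + 4 − 2α)` for fixed `α ∈ (0,1)`, then `(p_i)` is
strictly increasing and `p_i → ∞`. -/
theorem stmt13 (α : ℝ) (hα0 : 0 < α) (hα1 : α < 1)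
    (p : ℕ → ℝ) (hp : ∀ i, 2 < p i)
    (hrec : ∀ i, 1 / p (i + 1) = 1 / p i - α / (4 * p i + 4 - 2 * α)) :
    StrictMono p ∧ Tendsto p atTop atTop := by
  have hratio : 1 < 6 / (6 - α) := by rw [one_lt_div (by linarith)]; linarith
  have hstep : ∀ i, 6 / (6 - α) * p i ≤ p (i + 1) := fun i =>
    six_div_six_sub_mul_le_of_one_div_eq hα0 (by linarith) (hp i).le
      (by linarith [hp (i + 1)]) (hrec i)
  refine ⟨strictMono_nat_of_lt_succ fun i => ?_,
    tendsto_atTop_of_geom_le (by linarith [hp 0]) hratio hstep⟩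
  calc p i < 6 / (6 - α) * p i := lt_mul_of_one_lt_left (by linarith [hp i]) hratio
    _ ≤ p (i + 1) := hstep i
end
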